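/- arXiv:2306.01636 — 3 statements merged into one kernel-verified Lean document; each statement's English description precedes it below -/
import Mathlib

section
/- Let Ω ⊂ ℝⁿ be an open, bounded, convex domain containing the origin, and let u : cl(Ω) → ℝ be a continuous convex function with u = 0 on ∂Ω and u ≤ 0 in Ω. Then |u(0)| ≥ (dist(0, ∂Ω)/diam(Ω)) · sup_{x ∈ Ω} |u(x)|. -/
open Set

/-- for a continuous convex function `u ≤ 0` on a bounded open convex domain
`Ω ∋ 0` with `u = 0` on `∂Ω`, one has
`|u 0| ≥ (dist(0, ∂Ω)/diam Ω) · sup_{x ∈ Ω} |u x|`. -/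
theorem statement_8 (n : ℕ) (Ω : Set (EuclideanSpace ℝ (Fin n)))
    (hopen : IsOpen Ω) (hbd : Bornology.IsBounded Ω) (hconv : Convex ℝ Ω)
    (h0 : (0 : EuclideanSpace ℝ (Fin n)) ∈ Ω)
    (u : EuclideanSpace ℝ (Fin n) → ℝ)
    (hcont : ContinuousOn u (closure Ω))
    (huconv : ConvexOn ℝ (closure Ω) u)
    (hb : ∀ x ∈ frontier Ω, u x = 0)
    (hnonpos : ∀ x ∈ Ω, u x ≤ 0) :
    |u 0| ≥ (Metric.infDist 0 (frontier Ω) / Metric.diam Ω) *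
      sSup ((fun x => |u x|) '' Ω) := by
  set d := Metric.infDist 0 (frontier Ω) with hd
  set D := Metric.diam Ω with hD
  have hd0 : 0 ≤ d := Metric.infDist_nonneg
  have hD0 : 0 ≤ D := Metric.diam_nonneg
  have hu00 : u 0 ≤ 0 := hnonpos 0 h0
  have habs0 : |u 0| = -u 0 := abs_of_nonpos hu00
  -- key pointwise bound
  have key : ∀ x ∈ Ω, d / D * |u x| ≤ |u 0| := by
    intro x hx
    by_cases hxD : d / D ≤ 0
    · calc d / D * |u x| ≤ 0 * |u x| := by
            exact mul_le_mul_of_nonneg_right hxD (abs_nonneg _)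
        _ = 0 := by ring
        _ ≤ |u 0| := abs_nonneg _
    push_neg at hxD
    have hDpos : 0 < D := by
      rcases lt_or_ge 0 D with h | h
      · exact h
      · exfalso; have : D = 0 := le_antisymm h hD0
        rw [this] at hxD; simp at hxD
    have hdpos : 0 < d := by
      by_contra h
      push_neg at h
      have : d = 0 := le_antisymm h hd0
      rw [this] at hxD; simp at hxD
    -- d ≤ D
    have hfne : (frontier Ω).Nonempty := by
      by_contra h
      rw [not_nonempty_iff_eq_empty] at h
      rw [hd, h, Metric.infDist_empty] at hdpos
      exact lt_irrefl 0 hdpos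
    have hbdc : Bornology.IsBounded (closure Ω) := hbd.closure
    have hDc : Metric.diam (closure Ω) = D := by rw [hD, Metric.diam_closure]
    have hdD : d ≤ D := by
      obtain ⟨z, hz⟩ := hfne
      calc d ≤ dist (0 : EuclideanSpace ℝ (Fin n)) z := Metric.infDist_le_dist_of_mem hz
        _ ≤ Metric.diam (closure Ω) :=
            Metric.dist_le_diam_of_mem hbdc (subset_closure h0) (frontier_subset_closure hz)
        _ = D := hDc
    by_cases hx0 : x = 0
    · subst hx0
      have h1 : d / D ≤ 1 := (div_le_one hDpos).mpr hdD
      nlinarith [abs_nonneg (u (0 : EuclideanSpace ℝ (Fin n)))]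
    -- x ≠ 0 : build boundary point on ray from x through 0
    have hxn : 0 < ‖x‖ := norm_pos_iff.mpr hx0
    set S : Set ℝ := {t : ℝ | 0 ≤ t ∧ (-t) • x ∈ Ω} with hS
    have hS0 : (0 : ℝ) ∈ S := by constructor; rfl; simpa using h0
    obtain ⟨C, hC⟩ := hbd.exists_norm_le
    have hSbdd : BddAbove S := by
      refine ⟨C / ‖x‖, fun t ht => ?_⟩
      have := hC _ ht.2
      rw [norm_smul, norm_neg, Real.norm_eq_abs, abs_of_nonneg ht.1] at this
      exact (le_div_iff₀ hxn).mpr this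
    set T := sSup S with hT
    have hTmem : ∀ t, 0 ≤ t → t < T → (-t) • x ∈ Ω := by
      intro t ht htT
      obtain ⟨s, hsS, hts⟩ := exists_lt_of_lt_csSup ⟨0, hS0⟩ htT
      have hs0 : 0 < s := lt_of_le_of_lt ht hts
      have : (-t) • x = (t / s) • ((-s) • x) + (1 - t / s) • (0 : EuclideanSpace ℝ (Fin n)) := by
        rw [smul_zero, add_zero, smul_smul]
        congr 1
        field_simp
      rw [this]
      exact hconv hsS.2 h0 (div_nonneg ht hs0.le)
        (by rw [sub_nonneg, div_le_one hs0]; exact hts.le) (by ring)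
    have hTpos : 0 < T := by
      obtain ⟨ε, hε, hball⟩ := Metric.isOpen_iff.mp hopen 0 h0
      have hmem : ε / (2 * ‖x‖) ∈ S := by
        constructor
        · positivity
        · apply hball
          rw [Metric.mem_ball, dist_zero_right, norm_smul, norm_neg, Real.norm_eq_abs,
            abs_of_nonneg (by positivity : (0:ℝ) ≤ ε / (2 * ‖x‖))]
          rw [div_mul_eq_mul_div, mul_comm (2:ℝ) ‖x‖, ← div_div, mul_div_assoc]
          rw [div_self hxn.ne']
          linarith
      calc (0:ℝ) < ε / (2 * ‖x‖) := by positivity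
        _ ≤ T := le_csSup hSbdd hmem
    set z : EuclideanSpace ℝ (Fin n) := (-T) • x with hz
    have hzcl : z ∈ closure Ω := by
      have hcont' : Continuous (fun t : ℝ => (-t) • x) :=
        (continuous_neg).smul continuous_const
      have hTcl : T ∈ closure (Set.Ico (0:ℝ) T) := by
        rw [closure_Ico hTpos.ne]
        exact ⟨hTpos.le, le_refl _⟩
      have := mem_closure_image hcont'.continuousAt (s := Set.Ico (0:ℝ) T) hTcl
      refine closure_mono ?_ this
      rintro _ ⟨t, ⟨ht0, htT⟩, rfl⟩
      exact hTmem t ht0 htT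
    have hznot : z ∉ Ω := by
      intro hzΩ
      obtain ⟨ε, hε, hball⟩ := Metric.isOpen_iff.mp hopen z hzΩ
      have hδ : (0:ℝ) < ε / (2 * ‖x‖) := by positivity
      have hmem : T + ε / (2 * ‖x‖) ∈ S := by
        refine ⟨by linarith, ?_⟩
        apply hball
        rw [Metric.mem_ball, dist_eq_norm]
        have : (-(T + ε / (2 * ‖x‖))) • x - z = (-(ε / (2 * ‖x‖))) • x := by
          rw [hz]; module
        rw [this, norm_smul, Real.norm_eq_abs, abs_neg, abs_of_nonneg hδ.le]
        rw [div_mul_eq_mul_div, mul_comm (2:ℝ) ‖x‖, ← div_div, mul_div_assoc]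
        rw [div_self hxn.ne']
        linarith
      have := le_csSup hSbdd hmem
      linarith
    have hzfr : z ∈ frontier Ω := by
      rw [hopen.frontier_eq]
      exact ⟨hzcl, hznot⟩
    have huz : u z = 0 := hb z hzfr
    -- convexity combination: 0 = λ z + (1-λ) x with λ = 1/(1+T)
    set lam : ℝ := 1 / (1 + T) with hlam
    have h1T : (0:ℝ) < 1 + T := by linarith
    have hlam0 : 0 ≤ lam := by positivity
    have hlam1 : lam ≤ 1 := by
      rw [hlam, div_le_one h1T]; linarith
    have hcomb : lam • z + (1 - lam) • x = (0 : EuclideanSpace ℝ (Fin n)) := by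
      rw [hz, smul_smul]
      have : lam * -T + (1 - lam) = 0 := by
        rw [hlam]; field_simp; ring
      rw [← add_smul, this, zero_smul]
    have hconv_ineq := huconv.2 (frontier_subset_closure hzfr) (subset_closure hx)
      hlam0 (by linarith : (0:ℝ) ≤ 1 - lam) (by ring)
    rw [hcomb] at hconv_ineq
    rw [huz, smul_zero, zero_add, smul_eq_mul] at hconv_ineq
    -- now u 0 ≤ (1 - lam) * u x
    have hux : u x ≤ 0 := hnonpos x hx
    have habsx : |u x| = -u x := abs_of_nonpos hux
    -- 1 - lam = T/(1+T), and d/D ≤ T/(1+T)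
    have hfrac : d / D ≤ 1 - lam := by
      have h1 : d ≤ T * ‖x‖ := by
        have : dist (0 : EuclideanSpace ℝ (Fin n)) z = T * ‖x‖ := by
          rw [dist_zero_left, hz, norm_smul, Real.norm_eq_abs, abs_neg,
            abs_of_nonneg hTpos.le]
        rw [hd, ← this]
        exact Metric.infDist_le_dist_of_mem hzfr
      have h2 : (1 + T) * ‖x‖ ≤ D := by
        have : dist x z = (1 + T) * ‖x‖ := by
          rw [dist_eq_norm, hz]
          have : x - (-T) • x = (1 + T) • x := by module
          rw [this, norm_smul, Real.norm_eq_abs, abs_of_nonneg h1T.le]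
        rw [← hDc, ← this]
        exact Metric.dist_le_diam_of_mem hbdc (subset_closure hx) hzcl
      have hB : (0:ℝ) < (1 + T) * ‖x‖ := by positivity
      have hlam' : 1 - lam = T * ‖x‖ / ((1 + T) * ‖x‖) := by
        rw [hlam]; field_simp; ring
      rw [hlam']
      exact div_le_div₀ (by positivity) h1 hB h2
    calc d / D * |u x| ≤ (1 - lam) * |u x| :=
          mul_le_mul_of_nonneg_right hfrac (abs_nonneg _)
      _ ≤ |u 0| := by
          rw [habs0, habsx]
          nlinarith [hconv_ineq]
  -- conclude via sup
  rw [ge_iff_le]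
  by_cases hdd : d / D ≤ 0
  · have h1 : d / D * sSup ((fun x => |u x|) '' Ω) ≤ 0 := by
      apply mul_nonpos_of_nonpos_of_nonneg hdd
      apply Real.sSup_nonneg
      rintro y hy
      obtain ⟨x, hx, rfl⟩ := hy
      exact abs_nonneg _
    exact h1.trans (abs_nonneg _)
  push_neg at hdd
  rw [← le_div_iff₀' hdd]
  have hne : ((fun x => |u x|) '' Ω).Nonempty := ⟨|u 0|, ⟨0, h0, rfl⟩⟩
  apply csSup_le hne
  rintro y ⟨x, hx, rfl⟩
  rw [le_div_iff₀' hdd]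
  exact key x hx
end

section
/- (Transformation formula) Let u ∈ 𝒞₀ with u < 0 in Ω, and let φ : ℝⁿ → ℝ be a positive C² convex function whose graph contains the radial graph of 1/(−u), i.e. φ(x/(−u(x))) = 1/(−u(x)) for all x ∈ Ω. Then for every x ∈ Ω, setting y := x/(−u(x)), one has det D²u(x) / (u*(x))^{n+2} = φ(y)^{n+2} · det D²φ(y). -/
open MeasureTheory Set
open scoped NNReal

noncomputable section

def hessian (n : ℕ) (u : (Fin n → ℝ) → ℝ) (x : Fin n → ℝ) : Matrix (Fin n) (Fin n) ℝ :=
  Matrix.of fun i j => iteratedFDeriv ℝ 2 u x ![Pi.single i 1, Pi.single j 1]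

def uStar (n : ℕ) (u : (Fin n → ℝ) → ℝ) (x : Fin n → ℝ) : ℝ :=
  fderiv ℝ u x x - u x

def C0 (n : ℕ) (Ω : Set (Fin n → ℝ)) : Set ((Fin n → ℝ) → ℝ) :=
  {u | ContDiff ℝ (⊤ : ℕ∞) u ∧ (∀ x ∈ closure Ω, (hessian n u x).PosDef) ∧
    ∀ x ∈ frontier Ω, u x = 0}

def Hfun (n : ℕ) (k : ℝ) (Ω : Set (Fin n → ℝ)) (u : (Fin n → ℝ) → ℝ) : ℝ :=
  (1 / ((n : ℝ) + k + 1)) * ∫ x in Ω, (uStar n u x) ^ k * (-(u x)) * (hessian n u x).det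

structure NiceDomain (n : ℕ) (Ω : Set (Fin n → ℝ)) : Prop where
  isOpen : IsOpen Ω
  bounded : Bornology.IsBounded Ω
  strictConvex : StrictConvex ℝ Ω
  zero_mem : (0 : Fin n → ℝ) ∈ Ω
  smooth : ∃ ρ : (Fin n → ℝ) → ℝ, ContDiff ℝ (⊤ : ℕ∞) ρ ∧ Ω = {x | ρ x < 0} ∧
    ∀ x ∈ frontier Ω, fderiv ℝ ρ x ≠ 0

def polarBody (n : ℕ) (Ω : Set (Fin n → ℝ)) : Set (Fin n → ℝ) :=
  {x | ∀ y ∈ Ω, ∑ i, x i * y i ≤ 1}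

def grad (n : ℕ) (u : (Fin n → ℝ) → ℝ) (x : Fin n → ℝ) : Fin n → ℝ :=
  fun i => fderiv ℝ u x (Pi.single i 1)

def lamUnder (n : ℕ) (k : ℝ) (Ω : Set (Fin n → ℝ)) : ℝ :=
  sInf { r | ∃ u ∈ C0 n Ω, (∃ x ∈ Ω, u x ≠ 0) ∧
    r = ((n : ℝ) + k + 1) * Hfun n k Ω u / ∫ x in Ω, |u x| ^ ((n : ℝ) + k + 1) }

def Jfun (n : ℕ) (k : ℝ) (Ω : Set (Fin n → ℝ)) (F : (Fin n → ℝ) → ℝ → ℝ)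
    (u : (Fin n → ℝ) → ℝ) : ℝ :=
  Hfun n k Ω u - ∫ x in Ω, ∫ s in (u x)..(0:ℝ), F x s

def IsC2Alpha (n : ℕ) (u : (Fin n → ℝ) → ℝ) (s : Set (Fin n → ℝ)) (α : ℝ≥0) : Prop :=
  ContDiffOn ℝ 2 u s ∧
    ∃ C : ℝ≥0, HolderOnWith C α (fun x => iteratedFDerivWithin ℝ 2 u s x) s

private lemma apply_pi {n : ℕ} {M : Type*} [NormedAddCommGroup M] [NormedSpace ℝ M]
    (L : (Fin n → ℝ) →L[ℝ] M) (a : Fin n → ℝ) :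
    L a = ∑ k, a k • L (Pi.single k 1) := by
  have ha : a = ∑ k, a k • (Pi.single k 1 : Fin n → ℝ) := by
    funext j
    simp [Finset.sum_apply, Pi.single_apply]
  conv_lhs => rw [ha]
  rw [map_sum]
  simp

set_option maxHeartbeats 2000000 in
/-- the transformation formula
`det D²u(x) / (u⋆(x))^{n+2} = φ(y)^{n+2} det D²φ(y)` with `y = x/(-u(x))`. -/
theorem statement_17 (n : ℕ) (Ω : Set (Fin n → ℝ)) (hΩ : NiceDomain n Ω)
    (u : (Fin n → ℝ) → ℝ) (hu : u ∈ C0 n Ω) (hneg : ∀ x ∈ Ω, u x < 0)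
    (φ : (Fin n → ℝ) → ℝ) (hφpos : ∀ y, 0 < φ y)
    (hφ : ContDiff ℝ 2 φ) (hφconv : ConvexOn ℝ univ φ)
    (hgraph : ∀ x ∈ Ω, φ ((-(u x))⁻¹ • x) = (-(u x))⁻¹) :
    ∀ x ∈ Ω,
      (hessian n u x).det / (uStar n u x) ^ (n + 2) =
        φ ((-(u x))⁻¹ • x) ^ (n + 2) * (hessian n φ ((-(u x))⁻¹ • x)).det := by
  classical
  obtain ⟨husm, -, -⟩ := hu
  have hΩo : IsOpen Ω := hΩ.isOpen
  have hdu : ∀ z, HasFDerivAt u (fderiv ℝ u z) z := fun z =>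
    (husm.differentiable (by simp) z).hasFDerivAt
  have hu2 : ∀ z, HasFDerivAt (fderiv ℝ u) (fderiv ℝ (fderiv ℝ u) z) z := fun z =>
    (((husm.fderiv_right (m := ((⊤:ℕ∞) : WithTop ℕ∞)) (by exact_mod_cast le_top)).differentiable
      (by simp)) z).hasFDerivAt
  have hφd : ∀ w, HasFDerivAt φ (fderiv ℝ φ w) w := fun w =>
    (hφ.differentiable two_ne_zero w).hasFDerivAt
  have hφ2 : ∀ w, HasFDerivAt (fderiv ℝ φ) (fderiv ℝ (fderiv ℝ φ) w) w := fun w =>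
    (((hφ.fderiv_right (by norm_num)).differentiable one_ne_zero) w).hasFDerivAt
  have hne : ∀ z ∈ Ω, -(u z) ≠ 0 := fun z hz => by
    have := hneg z hz; intro h; rw [neg_eq_zero] at h; linarith
  have hinv : ∀ z ∈ Ω, HasFDerivAt (fun w => (-(u w))⁻¹)
      (((-(u z)) ^ 2)⁻¹ • fderiv ℝ u z) z := by
    intro z hz
    have h2 := (hasDerivAt_inv (hne z hz)).comp_hasFDerivAt z ((hdu z).neg)
    simpa [Function.comp_def, smul_neg, neg_smul, neg_neg] using h2
  have hgd : ∀ z ∈ Ω, HasFDerivAt (fun w => (-(u w))⁻¹ • w)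
      ((-(u z))⁻¹ • ContinuousLinearMap.id ℝ (Fin n → ℝ)
        + ((((-(u z)) ^ 2)⁻¹ • fderiv ℝ u z).smulRight z)) z := fun z hz =>
    (hinv z hz).smul (hasFDerivAt_id z)
  have E1 : ∀ z ∈ Ω, (fderiv ℝ φ ((-(u z))⁻¹ • z)).comp
      ((-(u z))⁻¹ • ContinuousLinearMap.id ℝ (Fin n → ℝ)
        + ((((-(u z)) ^ 2)⁻¹ • fderiv ℝ u z).smulRight z))
      = ((-(u z)) ^ 2)⁻¹ • fderiv ℝ u z := by
    intro z hz
    have hA : HasFDerivAt (fun w => φ ((-(u w))⁻¹ • w))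
        ((fderiv ℝ φ ((-(u z))⁻¹ • z)).comp
          ((-(u z))⁻¹ • ContinuousLinearMap.id ℝ (Fin n → ℝ)
            + ((((-(u z)) ^ 2)⁻¹ • fderiv ℝ u z).smulRight z))) z :=
      (hφd _).comp z (hgd z hz)
    have hEv : (fun w => φ ((-(u w))⁻¹ • w)) =ᶠ[nhds z] (fun w => (-(u w))⁻¹) :=
      Filter.eventually_of_mem (hΩo.mem_nhds hz) (fun w hw => hgraph w hw)
    calc (fderiv ℝ φ ((-(u z))⁻¹ • z)).comp
          ((-(u z))⁻¹ • ContinuousLinearMap.id ℝ (Fin n → ℝ)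
            + ((((-(u z)) ^ 2)⁻¹ • fderiv ℝ u z).smulRight z))
        = fderiv ℝ (fun w => φ ((-(u w))⁻¹ • w)) z := hA.fderiv.symm
      _ = fderiv ℝ (fun w => (-(u w))⁻¹) z := hEv.fderiv_eq
      _ = ((-(u z)) ^ 2)⁻¹ • fderiv ℝ u z := (hinv z hz).fderiv
  intro x hx
  have hux : u x < 0 := hneg x hx
  obtain ⟨c, hc⟩ : ∃ c : ℝ, c = -(u x) := ⟨_, rfl⟩
  rw [show -(u x) = c from hc.symm]
  obtain ⟨y, hy⟩ : ∃ y : Fin n → ℝ, y = c⁻¹ • x := ⟨_, rfl⟩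
  rw [show c⁻¹ • x = y from hy.symm]
  obtain ⟨du, hdux⟩ : ∃ du : (Fin n → ℝ) →L[ℝ] ℝ, du = fderiv ℝ u x := ⟨_, rfl⟩
  obtain ⟨U2, hU2⟩ : ∃ U2 : (Fin n → ℝ) →L[ℝ] (Fin n → ℝ) →L[ℝ] ℝ,
    U2 = fderiv ℝ (fderiv ℝ u) x := ⟨_, rfl⟩
  obtain ⟨Q, hQdef⟩ : ∃ Q : (Fin n → ℝ) →L[ℝ] ℝ, Q = fderiv ℝ φ y := ⟨_, rfl⟩
  obtain ⟨Φ2, hΦ2⟩ : ∃ Φ2 : (Fin n → ℝ) →L[ℝ] (Fin n → ℝ) →L[ℝ] ℝ,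
    Φ2 = fderiv ℝ (fderiv ℝ φ) y := ⟨_, rfl⟩
  obtain ⟨t, htdef⟩ : ∃ t : ℝ, t = du x + c := ⟨_, rfl⟩
  have hc0 : c ≠ 0 := by rw [hc]; intro h; rw [neg_eq_zero] at h; linarith
  have hcc : ((c:ℝ)^2)⁻¹ = c⁻¹ * c⁻¹ := by rw [sq, mul_inv]
  have hdx : du x = t - c := by rw [htdef]; ring
  -- first-order scalar consequences
  have E1x := E1 x hx
  rw [← hc, ← hdux, ← hy, ← hQdef] at E1x
  have evalE1 : ∀ v : Fin n → ℝ, c⁻¹ * Q v + (c^2)⁻¹ * du v * Q x = (c^2)⁻¹ * du v := by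
    intro v
    have h := DFunLike.congr_fun E1x v
    simp only [ContinuousLinearMap.coe_comp', Function.comp_apply,
      ContinuousLinearMap.add_apply, ContinuousLinearMap.coe_smul', Pi.smul_apply,
      ContinuousLinearMap.coe_id', id_eq, ContinuousLinearMap.smulRight_apply,
      ContinuousLinearMap.smul_apply, smul_eq_mul, map_add, _root_.map_smul] at h
    linear_combination h
  have hQxa : t * Q x = t - c := by
    have h := evalE1 x
    rw [hdx] at h
    field_simp at h
    have hz : c^3 * (t * Q x - (t - c)) = 0 := by linear_combination c^3 * h
    have := (mul_eq_zero.mp hz).resolve_left (pow_ne_zero _ hc0)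
    linarith
  have ht0 : t ≠ 0 := by
    intro h0
    rw [h0] at hQxa
    simp at hQxa
    exact hc0 (by linarith)
  have hQx : Q x = (t - c) / t := by
    rw [eq_div_iff ht0]; linarith [hQxa]
  have hqt : ∀ v : Fin n → ℝ, Q v = du v / t := by
    intro v
    have h := evalE1 v
    rw [hQx] at h
    field_simp at h
    have hz : c^4 * (t * Q v - du v) = 0 := by linear_combination c^3 * h
    have h5 := (mul_eq_zero.mp hz).resolve_left (pow_ne_zero _ hc0)
    rw [eq_div_iff ht0]; linarith
    -- second order identity
  have key : ∀ i j : Fin n,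
      Φ2 (Pi.single i 1) (Pi.single j 1)
        + c⁻¹ * du (Pi.single i 1) * Φ2 x (Pi.single j 1)
        + c⁻¹ * du (Pi.single j 1) * Φ2 (Pi.single i 1) x
        + c⁻¹ * du (Pi.single i 1) * (c⁻¹ * du (Pi.single j 1)) * Φ2 x x
        = (c / t) * U2 (Pi.single i 1) (Pi.single j 1) := by
    intro i j
    have hinvx : HasFDerivAt (fun w => (-(u w))⁻¹) (((-(u x)) ^ 2)⁻¹ • fderiv ℝ u x) x :=
      hinv x hx
    have hduj : HasFDerivAt (fun z => fderiv ℝ u z (Pi.single j 1))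
        ((fderiv ℝ (fderiv ℝ u) x).flip (Pi.single j 1)) x := by
      have h := (hu2 x).clm_apply (hasFDerivAt_const (Pi.single j 1 : Fin n → ℝ) x)
      simpa using h
    have hσd := hinvx.mul (hinvx.mul hduj)
    have hwd := (hinvx.smul (hasFDerivAt_const (Pi.single j 1 : Fin n → ℝ) x)).add
      (hσd.smul (hasFDerivAt_id x))
    have hφgx := HasFDerivAt.comp (f := fun w => (-(u w))⁻¹ • w) (x := x)
      (hφ2 ((-(u x))⁻¹ • x)) (hgd x hx)
    have hF := hφgx.clm_apply hwd
    have hFev : (fun z => (fderiv ℝ φ ((-(u z))⁻¹ • z))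
          ((-(u z))⁻¹ • (Pi.single j 1 : Fin n → ℝ) +
            ((-(u z))⁻¹ * ((-(u z))⁻¹ * fderiv ℝ u z (Pi.single j 1))) • z))
        =ᶠ[nhds x] fun z => (-(u z))⁻¹ * ((-(u z))⁻¹ * fderiv ℝ u z (Pi.single j 1)) := by
      refine Filter.eventually_of_mem (hΩo.mem_nhds hx) fun z hz => ?_
      have h := DFunLike.congr_fun (E1 z hz) (Pi.single j 1 : Fin n → ℝ)
      simp only [ContinuousLinearMap.coe_comp', Function.comp_apply,
        ContinuousLinearMap.add_apply, ContinuousLinearMap.coe_smul', Pi.smul_apply,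
        ContinuousLinearMap.coe_id', id_eq, ContinuousLinearMap.smulRight_apply,
        ContinuousLinearMap.smul_apply, smul_eq_mul, sq, mul_inv, mul_assoc] at h
      exact h
    have hDD := hF.fderiv.symm.trans (hFev.fderiv_eq.trans hσd.fderiv)
    have hk := DFunLike.congr_fun hDD (Pi.single i 1 : Fin n → ℝ)
    simp only [ContinuousLinearMap.coe_comp', Function.comp_apply,
      ContinuousLinearMap.add_apply, ContinuousLinearMap.coe_smul', Pi.smul_apply,
      ContinuousLinearMap.coe_id', id_eq, ContinuousLinearMap.smulRight_apply,
      ContinuousLinearMap.smul_apply, smul_eq_mul, ContinuousLinearMap.flip_apply,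
      ContinuousLinearMap.zero_apply, smul_zero, zero_add, add_zero,
      ContinuousLinearMap.comp_zero, map_add, _root_.map_smul, Pi.mul_apply, Pi.add_apply, Pi.smul_apply', id_eq] at hk
    rw [show (-(u x)) = c from hc.symm] at hk
    simp only [← hy, ← hQdef, ← hdux, ← hU2, ← hΦ2, hcc] at hk
    simp only [hqt, hdx] at hk
    field_simp at hk ⊢
    apply mul_left_cancel₀ (mul_ne_zero (pow_ne_zero 22 hc0) (pow_ne_zero 2 ht0)
      : (c ^ 22 * t ^ 2 : ℝ) ≠ 0)
    linear_combination c ^ 22 * t ^ 2 * hk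
  -- matrix reformulation
  have hBent : ∀ k l : Fin n, hessian n φ y k l = Φ2 (Pi.single k 1) (Pi.single l 1) := by
    intro k l
    show iteratedFDeriv ℝ 2 φ y ![Pi.single k 1, Pi.single l 1] = _
    rw [iteratedFDeriv_two_apply, hΦ2]
    simp
  have hAent : ∀ k l : Fin n, hessian n u x k l = U2 (Pi.single k 1) (Pi.single l 1) := by
    intro k l
    show iteratedFDeriv ℝ 2 u x ![Pi.single k 1, Pi.single l 1] = _
    rw [iteratedFDeriv_two_apply, hU2]
    simp
  have hΦfst : ∀ b : Fin n → ℝ, Φ2 x b = ∑ k, x k * Φ2 (Pi.single k 1) b := by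
    intro b
    rw [apply_pi Φ2 x]
    simp [ContinuousLinearMap.sum_apply]
  have hΦsnd : ∀ a : (Fin n → ℝ) →L[ℝ] ℝ, a x = ∑ l, x l * a (Pi.single l 1) := by
    intro a
    rw [apply_pi a x]
    simp
  obtain ⟨J, hJ⟩ : ∃ J : Matrix (Fin n) (Fin n) ℝ, J = Matrix.of (fun k i =>
      (Pi.single i 1 : Fin n → ℝ) k + c⁻¹ * du (Pi.single i 1) * x k) := ⟨_, rfl⟩
  have hmat : J.transpose * hessian n φ y * J = (c / t) • hessian n u x := by
    ext i j
    have step1 : ∀ l : Fin n, (∑ k, ((Pi.single i 1 : Fin n → ℝ) k + c⁻¹ * du (Pi.single i 1) * x k) *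
        Φ2 (Pi.single k 1) (Pi.single l 1))
        = Φ2 (Pi.single i 1) (Pi.single l 1)
          + c⁻¹ * du (Pi.single i 1) * Φ2 x (Pi.single l 1) := by
      intro l
      calc (∑ k, ((Pi.single i 1 : Fin n → ℝ) k + c⁻¹ * du (Pi.single i 1) * x k) *
            Φ2 (Pi.single k 1) (Pi.single l 1))
          = (∑ k, (Pi.single i 1 : Fin n → ℝ) k * Φ2 (Pi.single k 1) (Pi.single l 1))
            + ∑ k, c⁻¹ * du (Pi.single i 1) * (x k * Φ2 (Pi.single k 1) (Pi.single l 1)) := by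
            rw [← Finset.sum_add_distrib]
            exact Finset.sum_congr rfl fun k _ => by ring
        _ = Φ2 (Pi.single i 1) (Pi.single l 1)
            + c⁻¹ * du (Pi.single i 1) * Φ2 x (Pi.single l 1) := by
            rw [hΦfst, Finset.mul_sum]
            congr 1
            simp [Pi.single_apply, ite_mul, Finset.sum_ite_eq, Finset.sum_ite_eq']
    have main : (∑ l, (Φ2 (Pi.single i 1) (Pi.single l 1)
          + c⁻¹ * du (Pi.single i 1) * Φ2 x (Pi.single l 1)) *
          ((Pi.single j 1 : Fin n → ℝ) l + c⁻¹ * du (Pi.single j 1) * x l))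
        = Φ2 (Pi.single i 1) (Pi.single j 1)
          + c⁻¹ * du (Pi.single i 1) * Φ2 x (Pi.single j 1)
          + c⁻¹ * du (Pi.single j 1) * Φ2 (Pi.single i 1) x
          + c⁻¹ * du (Pi.single i 1) * (c⁻¹ * du (Pi.single j 1)) * Φ2 x x := by
      have e1 : (∑ l, Φ2 (Pi.single i 1) (Pi.single l 1) * (Pi.single j 1 : Fin n → ℝ) l)
          = Φ2 (Pi.single i 1) (Pi.single j 1) := by
        simp [Pi.single_apply, mul_ite, Finset.sum_ite_eq, Finset.sum_ite_eq']
      have e3 : (∑ l, Φ2 x (Pi.single l 1) * (Pi.single j 1 : Fin n → ℝ) l)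
          = Φ2 x (Pi.single j 1) := by
        simp [Pi.single_apply, mul_ite, Finset.sum_ite_eq, Finset.sum_ite_eq']
      calc (∑ l, (Φ2 (Pi.single i 1) (Pi.single l 1)
            + c⁻¹ * du (Pi.single i 1) * Φ2 x (Pi.single l 1)) *
            ((Pi.single j 1 : Fin n → ℝ) l + c⁻¹ * du (Pi.single j 1) * x l))
          = (∑ l, Φ2 (Pi.single i 1) (Pi.single l 1) * (Pi.single j 1 : Fin n → ℝ) l)
            + ((∑ l, c⁻¹ * du (Pi.single i 1) *
                (Φ2 x (Pi.single l 1) * (Pi.single j 1 : Fin n → ℝ) l))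
            + ((∑ l, c⁻¹ * du (Pi.single j 1) *
                (x l * Φ2 (Pi.single i 1) (Pi.single l 1)))
            + ∑ l, c⁻¹ * du (Pi.single i 1) * (c⁻¹ * du (Pi.single j 1)) *
                (x l * Φ2 x (Pi.single l 1)))) := by
            rw [← Finset.sum_add_distrib, ← Finset.sum_add_distrib, ← Finset.sum_add_distrib]
            exact Finset.sum_congr rfl fun l _ => by ring
        _ = Φ2 (Pi.single i 1) (Pi.single j 1)
            + c⁻¹ * du (Pi.single i 1) * Φ2 x (Pi.single j 1)
            + c⁻¹ * du (Pi.single j 1) * Φ2 (Pi.single i 1) x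
            + c⁻¹ * du (Pi.single i 1) * (c⁻¹ * du (Pi.single j 1)) * Φ2 x x := by
            rw [← Finset.mul_sum, ← Finset.mul_sum, ← Finset.mul_sum, e1, e3,
              ← hΦsnd (Φ2 (Pi.single i 1)), ← hΦsnd (Φ2 x)]
            ring
    calc (J.transpose * hessian n φ y * J) i j
        = ∑ l, (∑ k, J k i * hessian n φ y k l) * J l j := by
          simp only [Matrix.mul_apply, Matrix.transpose_apply]
      _ = ∑ l, (∑ k, ((Pi.single i 1 : Fin n → ℝ) k + c⁻¹ * du (Pi.single i 1) * x k) *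
            Φ2 (Pi.single k 1) (Pi.single l 1)) *
            ((Pi.single j 1 : Fin n → ℝ) l + c⁻¹ * du (Pi.single j 1) * x l) := by
          simp only [hJ, Matrix.of_apply, hBent]
      _ = ∑ l, (Φ2 (Pi.single i 1) (Pi.single l 1)
            + c⁻¹ * du (Pi.single i 1) * Φ2 x (Pi.single l 1)) *
            ((Pi.single j 1 : Fin n → ℝ) l + c⁻¹ * du (Pi.single j 1) * x l) :=
          Finset.sum_congr rfl fun l _ => by rw [step1]
      _ = Φ2 (Pi.single i 1) (Pi.single j 1)
          + c⁻¹ * du (Pi.single i 1) * Φ2 x (Pi.single j 1)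
          + c⁻¹ * du (Pi.single j 1) * Φ2 (Pi.single i 1) x
          + c⁻¹ * du (Pi.single i 1) * (c⁻¹ * du (Pi.single j 1)) * Φ2 x x := main
      _ = ((c / t) • hessian n u x) i j := by
          simp only [Matrix.smul_apply, smul_eq_mul, hAent]
          linear_combination key i j
  -- determinant computation
  have hdetJ : J.det = c⁻¹ * t := by
    have hJeq : J = 1 + Matrix.replicateCol Unit x *
        Matrix.replicateRow Unit (fun i => c⁻¹ * du (Pi.single i 1)) := by
      ext k i
      simp only [hJ, Matrix.of_apply, Matrix.add_apply, Matrix.one_apply, Matrix.mul_apply,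
        Matrix.replicateCol_apply, Matrix.replicateRow_apply, Finset.univ_unique, Finset.sum_const,
        Finset.card_singleton, one_smul, Pi.single_apply]
      ring
    rw [hJeq, Matrix.det_one_add_replicateCol_mul_replicateRow]
    have hdot : dotProduct (fun i => c⁻¹ * du (Pi.single i 1)) x = c⁻¹ * du x := by
      rw [hΦsnd du, Finset.mul_sum]
      simp only [dotProduct]
      exact Finset.sum_congr rfl fun k _ => by ring
    rw [hdot, hdx]
    field_simp
    ring
  have hdet := congrArg Matrix.det hmat
  rw [Matrix.det_mul, Matrix.det_mul, Matrix.det_transpose, Matrix.det_smul, hdetJ] at hdet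
  simp only [Fintype.card_fin] at hdet
  have hφy : φ y = c⁻¹ := by
    have h := hgraph x hx
    rw [show -(u x) = c from hc.symm, show c⁻¹ • x = y from hy.symm] at h
    exact h
  have hust : uStar n u x = t := by
    have h0 : uStar n u x = fderiv ℝ u x x - u x := rfl
    rw [h0, ← hdux, htdef]
    have : u x = -c := by rw [hc]; ring
    rw [this]; ring
  rw [hust, hφy]
  rw [show ((c:ℝ)⁻¹) ^ (n + 2) * (hessian n φ y).det
      = (hessian n φ y).det / c ^ (n + 2) from by rw [inv_pow]; ring]
  rw [div_eq_div_iff (pow_ne_zero _ ht0) (pow_ne_zero _ hc0)]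
  field_simp at hdet
  have htn : (c / t) ^ n * t ^ n = c ^ n := by rw [div_pow, div_mul_cancel₀ _ (pow_ne_zero _ ht0)]
  linear_combination -(t ^ n) * hdet - c ^ 2 * (hessian n u x).det * htn

end
end

section
/- Let u ∈ 𝒞₀ with u < 0 in Ω, and let φ : ℝⁿ → ℝ be a positive C¹ convex function satisfying φ(x/(−u(x))) = 1/(−u(x)) for all x ∈ Ω. Then for every x ∈ Ω, setting y := x/(−u(x)), the gradient of φ satisfies ∇φ(y) = ∇u(x)/u*(x). -/
open MeasureTheory Set
open scoped NNReal

noncomputable section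

/-- the gradient relation `∇φ(y) = ∇u(x)/u⋆(x)` with `y = x/(-u(x))`. -/
theorem statement_18 (n : ℕ) (Ω : Set (Fin n → ℝ)) (hΩ : NiceDomain n Ω)
    (u : (Fin n → ℝ) → ℝ) (hu : u ∈ C0 n Ω) (hneg : ∀ x ∈ Ω, u x < 0)
    (φ : (Fin n → ℝ) → ℝ) (hφpos : ∀ y, 0 < φ y)
    (hφ : ContDiff ℝ 1 φ) (hφconv : ConvexOn ℝ univ φ)
    (hgraph : ∀ x ∈ Ω, φ ((-(u x))⁻¹ • x) = (-(u x))⁻¹) :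
    ∀ x ∈ Ω,
      fderiv ℝ φ ((-(u x))⁻¹ • x) = (uStar n u x)⁻¹ • fderiv ℝ u x := by
  intro x hx
  have hud : Differentiable ℝ u := hu.1.differentiable (by simp)
  have hvpos : 0 < -(u x) := by linarith [hneg x hx]
  have hv0 : -(u x) ≠ 0 := ne_of_gt hvpos
  set D : (Fin n → ℝ) →L[ℝ] ℝ := fderiv ℝ u x with hD
  have hnd : DifferentiableAt ℝ (fun z => -(u z)) x := (hud x).neg
  have hfd : DifferentiableAt ℝ (fun z => (-(u z))⁻¹) x := hnd.inv hv0
  have hgd : DifferentiableAt ℝ (fun z => (-(u z))⁻¹ • z) x := hfd.smul differentiableAt_id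
  have hφd : DifferentiableAt ℝ φ ((-(u x))⁻¹ • x) :=
    (hφ.differentiable one_ne_zero).differentiableAt
  set L : (Fin n → ℝ) →L[ℝ] ℝ := fderiv ℝ φ ((-(u x))⁻¹ • x) with hL
  have hF : fderiv ℝ (fun z => (-(u z))⁻¹) x = ((-(u x)) ^ 2)⁻¹ • D := by
    have h1 : (fun z => (-(u z))⁻¹) = (fun t : ℝ => t⁻¹) ∘ (fun z => -(u z)) := rfl
    rw [h1, fderiv_comp x (differentiableAt_inv hv0) hnd, fderiv_fun_neg]
    ext h
    simp [ContinuousLinearMap.comp_apply, fderiv_inv, hD]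
    ring
  have hG : fderiv ℝ (fun z => (-(u z))⁻¹ • z) x
      = (-(u x))⁻¹ • ContinuousLinearMap.id ℝ (Fin n → ℝ)
        + ((((-(u x)) ^ 2)⁻¹ • D)).smulRight x := by
    rw [fderiv_fun_smul hfd differentiableAt_fun_id, hF, fderiv_fun_id]
  have heq : (fun z => φ ((-(u z))⁻¹ • z)) =ᶠ[nhds x] (fun z => (-(u z))⁻¹) :=
    Filter.eventually_of_mem (hΩ.isOpen.mem_nhds hx) (fun z hz => hgraph z hz)
  have hcomp := fderiv_comp (g := φ) (f := fun z => (-(u z))⁻¹ • z) x hφd hgd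
  rw [Function.comp_def] at hcomp
  have hchain : L.comp (fderiv ℝ (fun z => (-(u z))⁻¹ • z) x)
      = fderiv ℝ (fun z => (-(u z))⁻¹) x := by
    rw [← hcomp]
    exact heq.fderiv_eq
  rw [hG, hF] at hchain
  have key : ∀ h, (-(u x))⁻¹ * L h + ((-(u x)) ^ 2)⁻¹ * D h * L x
      = ((-(u x)) ^ 2)⁻¹ * D h := by
    intro h
    have h2 := DFunLike.congr_fun hchain h
    simp only [ContinuousLinearMap.comp_apply, ContinuousLinearMap.add_apply,
      ContinuousLinearMap.coe_smul', Pi.smul_apply, ContinuousLinearMap.coe_id', id_eq,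
      ContinuousLinearMap.smulRight_apply, map_add, _root_.map_smul, smul_eq_mul] at h2
    linarith [h2]
  have hAx := key x
  have hinv : (-(u x)) * (-(u x))⁻¹ = 1 := mul_inv_cancel₀ hv0
  have hinv2 : (-(u x)) ^ 2 * ((-(u x)) ^ 2)⁻¹ = 1 := mul_inv_cancel₀ (pow_ne_zero _ hv0)
  have hA : L x * (D x + -(u x)) = D x := by
    linear_combination (-(u x)) ^ 2 * hAx - (-(u x)) * (L x) * hinv + (D x - D x * L x) * hinv2
  have hstar : uStar n u x = D x + -(u x) := by
    simp only [uStar, hD]; ring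
  have hstar0 : D x + -(u x) ≠ 0 := by
    intro h0
    have hb : D x = -(-(u x)) := by linarith
    rw [hb] at hAx
    have hcon : (0:ℝ) = -(-(u x)) := by
      linear_combination (-(u x)) ^ 2 * hAx - (-(u x)) * (L x) * hinv
        + ((-(u x)) * (L x) - (-(u x))) * hinv2
    linarith
  ext h
  have h1 : (-(u x)) * L h + D h * L x = D h := by
    linear_combination (-(u x)) ^ 2 * (key h) - (-(u x)) * (L h) * hinv
      + (D h - D h * L x) * hinv2
  simp only [ContinuousLinearMap.coe_smul', Pi.smul_apply, smul_eq_mul]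
  rw [hstar, inv_mul_eq_div, eq_div_iff hstar0]
  refine mul_left_cancel₀ hv0 ?_
  linear_combination (D x + -(u x)) * h1 - (D h) * hA

end
end
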